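/- arXiv:2206.08725 — 8 statements merged into one kernel-verified Lean document; each statement's English description precedes it below -/
import Mathlib

section
/- Let C be a linear code of length n over R with component codes C_1, C_2, C_3, C_4, and suppose C_i ≠ {0} for each i = 1,2,3,4. Then d_L(C) = min_{1 ≤ i ≤ 4} d_H(C_i). -/
/-!
Multiplying a codeword by the idempotent `γ_i` kills every component but the `i`-th, so each
nonzero word of `C_i` is the `i`-th component of a codeword of the same Lee weight:
`d_L(C) ≤ d_H(C_i)`. Conversely, the Lee weight of a codeword is the sum of the Hamming weights
of its four components, at least one of which is a nonzero word of some `C_i`.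
-/

open scoped BigOperators

/-- The ring `R = F_q + uF_q + vF_q + uvF_q ≅ F_q^4` (componentwise operations). -/
abbrev RR (F : Type*) := Fin 4 → F

/-- The pairwise orthogonal idempotents `γ_1, γ_2, γ_3, γ_4` of `R`,
realized as the standard idempotents of `F_q^4`. -/
def gam (F : Type*) [Field F] (i : Fin 4) : RR F := Pi.single i 1

/-- The `i`-th component code `C_i ⊆ F_q^n` of a code `C ⊆ R^n`. -/
def compCode {F : Type*} [Field F] {n : ℕ} (C : Set (Fin n → RR F)) (i : Fin 4) :
    Set (Fin n → F) :=
  {x | ∃ c ∈ C, ∀ j, c j i = x j}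

/-- Euclidean dual of a code over `R`. -/
def euclDualR {F : Type*} [Field F] {n : ℕ} (C : Set (Fin n → RR F)) :
    Set (Fin n → RR F) :=
  {s | ∀ t ∈ C, ∑ j, t j * s j = 0}

/-- `l`-Galois dual of a code over `R`; apply with `pl = p ^ l`
(the `l`-Galois inner product is `[t,s]_l = ∑ j, t j * (s j) ^ (p ^ l)`,
since `F^l(r) = r ^ (p ^ l)`). -/
def galDualR {F : Type*} [Field F] {n : ℕ} (pl : ℕ) (C : Set (Fin n → RR F)) :
    Set (Fin n → RR F) :=
  {s | ∀ t ∈ C, ∑ j, t j * s j ^ pl = 0}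

/-- `l`-Galois dual of a code over the field `F = F_q`; apply with `pl = p ^ l`. -/
def galDualF {F : Type*} [Field F] {ι : Type*} [Fintype ι] (pl : ℕ) (D : Set (ι → F)) :
    Set (ι → F) :=
  {x | ∀ c ∈ D, ∑ j, c j * x j ^ pl = 0}

/-- Lee weight of a vector over `R`: the sum of the Hamming weights of the
quadruples of `γ`-components of the coordinates. -/
def leeWt {F : Type*} [Field F] [DecidableEq F] {n : ℕ} (c : Fin n → RR F) : ℕ :=
  ∑ j, hammingNorm (c j)

/-- Minimum Lee distance of a code over `R`. -/
noncomputable def dLee {F : Type*} [Field F] [DecidableEq F] {n : ℕ} (C : Set (Fin n → RR F)) : ℕ :=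
  sInf (leeWt '' {c ∈ C | c ≠ 0})

/-- Minimum Hamming distance of a code over `F_q`. -/
noncomputable def dHam {F : Type*} [Field F] [DecidableEq F] {ι : Type*} [Fintype ι]
    (D : Set (ι → F)) : ℕ :=
  sInf (hammingNorm '' {x ∈ D | x ≠ 0})

/-- The Gray map `ρ : R^n → F_q^{4n}`. -/
def gray {F : Type*} [Field F] {n : ℕ} (c : Fin n → RR F) : Fin n × Fin 4 → F :=
  fun ji => c ji.1 ji.2

/-- The code `C^α = {(α_1 c_1, …, α_n c_n) : c ∈ C}` over `R`. -/
def scaleCode {F : Type*} [Field F] {n : ℕ} (α : Fin n → RR F)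
    (C : Set (Fin n → RR F)) : Set (Fin n → RR F) :=
  (fun c => fun j => α j * c j) '' C

/-- The code `C^a = {(a_1 c_1, …, a_n c_n) : c ∈ C}` over `F_q`. -/
def scaleCodeF {F : Type*} [Field F] {n : ℕ} (a : Fin n → F)
    (D : Set (Fin n → F)) : Set (Fin n → F) :=
  (fun c => fun j => a j * c j) '' D

/-- `P_S`: the submatrix of `P` obtained by deleting the rows and columns
indexed by `S` (its determinant is `1` when `S` is everything, since the
empty matrix has determinant `1`). -/
def minorOff {F : Type*} [Field F] {m : ℕ} (P : Matrix (Fin m) (Fin m) F)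
    (S : Finset (Fin m)) : Matrix {i : Fin m // i ∉ S} {i : Fin m // i ∉ S} F :=
  P.submatrix (fun a => (a : Fin m)) (fun a => (a : Fin m))

lemma sum_hammingNorm_comm {ι κ β : Type*} [Fintype ι] [Fintype κ] [Zero β] [DecidableEq β]
    (c : ι → κ → β) : ∑ j, hammingNorm (c j) = ∑ k, hammingNorm (fun j => c j k) := by
  simp only [hammingNorm, Finset.card_filter]
  exact Finset.sum_comm

lemma dHam_le_hammingNorm {F ι : Type*} [Field F] [DecidableEq F] [Fintype ι]
    {D : Set (ι → F)} {x : ι → F} (hx : x ∈ D) (hx0 : x ≠ 0) : dHam D ≤ hammingNorm x :=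
  Nat.sInf_le ⟨x, ⟨hx, hx0⟩, rfl⟩

lemma dLee_le_leeWt {F : Type*} [Field F] [DecidableEq F] {n : ℕ}
    {C : Set (Fin n → RR F)} {c : Fin n → RR F} (hc : c ∈ C) (hc0 : c ≠ 0) :
    dLee C ≤ leeWt c :=
  Nat.sInf_le ⟨c, ⟨hc, hc0⟩, rfl⟩

section ComponentCodes

variable {F : Type*} [Field F] {n : ℕ}

lemma leeWt_eq_sum_hammingNorm [DecidableEq F] (c : Fin n → RR F) :
    leeWt c = ∑ i, hammingNorm (fun j => c j i) :=
  sum_hammingNorm_comm c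

lemma zero_mem_compCode (C : Submodule (RR F) (Fin n → RR F)) (i : Fin 4) :
    0 ∈ compCode (C : Set (Fin n → RR F)) i :=
  ⟨0, C.zero_mem, fun _ => rfl⟩

lemma exists_ne_zero_mem_compCode (C : Submodule (RR F) (Fin n → RR F)) {i : Fin 4}
    (hi : compCode (C : Set (Fin n → RR F)) i ≠ {0}) :
    ∃ x ∈ compCode (C : Set (Fin n → RR F)) i, x ≠ 0 := by
  by_contra! h
  exact hi (Set.eq_singleton_iff_unique_mem.mpr ⟨zero_mem_compCode C i, h⟩)

lemma gam_smul_apply (i k : Fin 4) (c : Fin n → RR F) (j : Fin n) :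
    (gam F i • c) j k = if k = i then c j k else 0 := by
  by_cases h : k = i
  · subst h; simp [gam]
  · simp [gam, h]

lemma leeWt_gam_smul [DecidableEq F] (i : Fin 4) (c : Fin n → RR F) :
    leeWt (gam F i • c) = hammingNorm (fun j => c j i) := by
  rw [leeWt_eq_sum_hammingNorm, Finset.sum_eq_single i]
  · simp only [gam_smul_apply, if_true]
  · intro k _ hk
    simp only [gam_smul_apply, if_neg hk]
    exact hammingNorm_zero
  · simp

lemma exists_leeWt_eq_of_mem_compCode [DecidableEq F] (C : Submodule (RR F) (Fin n → RR F))
    {i : Fin 4} {x : Fin n → F} (hx : x ∈ compCode (C : Set (Fin n → RR F)) i) (hx0 : x ≠ 0) :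
    ∃ c ∈ C, c ≠ 0 ∧ leeWt c = hammingNorm x := by
  obtain ⟨c, hc, hci⟩ := hx
  have hgc : (fun j => c j i) = x := funext hci
  refine ⟨gam F i • c, C.smul_mem _ hc, fun h0 => hx0 ?_, by rw [leeWt_gam_smul, hgc]⟩
  rw [← hammingNorm_eq_zero, ← hgc, ← leeWt_gam_smul i c, h0]
  simp [leeWt]

lemma dLee_le_dHam_compCode [DecidableEq F] (C : Submodule (RR F) (Fin n → RR F)) {i : Fin 4}
    (hi : compCode (C : Set (Fin n → RR F)) i ≠ {0}) :
    dLee (C : Set (Fin n → RR F)) ≤ dHam (compCode (C : Set (Fin n → RR F)) i) := by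
  obtain ⟨x, hx, hx0⟩ := exists_ne_zero_mem_compCode C hi
  refine le_csInf ⟨_, x, ⟨hx, hx0⟩, rfl⟩ ?_
  rintro _ ⟨y, ⟨hy, hy0⟩, rfl⟩
  obtain ⟨c, hc, hc0, hcy⟩ := exists_leeWt_eq_of_mem_compCode C hy hy0
  exact hcy ▸ dLee_le_leeWt hc hc0

lemma exists_dHam_compCode_le_leeWt [DecidableEq F] {C : Set (Fin n → RR F)} {c : Fin n → RR F}
    (hc : c ∈ C) (hc0 : c ≠ 0) : ∃ i, dHam (compCode C i) ≤ leeWt c := by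
  obtain ⟨i, hi⟩ : ∃ i, (fun j => c j i) ≠ 0 := by
    by_contra! h
    exact hc0 (funext fun j => funext fun i => congrFun (h i) j)
  have hmem : (fun j => c j i) ∈ compCode C i := ⟨c, hc, fun _ => rfl⟩
  refine ⟨i, (dHam_le_hammingNorm hmem hi).trans ?_⟩
  rw [leeWt_eq_sum_hammingNorm]
  exact Finset.single_le_sum (f := fun k => hammingNorm (fun j => c j k))
    (fun _ _ => Nat.zero_le _) (Finset.mem_univ i)

end ComponentCodes

theorem statement2_general {n : ℕ}
    (F : Type*) [Field F] [DecidableEq F]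
    (C : Submodule (RR F) (Fin n → RR F))
    (hnz : ∀ i, compCode (C : Set (Fin n → RR F)) i ≠ {0}) :
    dLee (C : Set (Fin n → RR F)) =
      Finset.univ.inf' Finset.univ_nonempty
        (fun i : Fin 4 => dHam (compCode (C : Set (Fin n → RR F)) i)) := by
  apply le_antisymm
  · obtain ⟨i, -, hi⟩ := Finset.exists_mem_eq_inf' Finset.univ_nonempty
      (fun i : Fin 4 => dHam (compCode (C : Set (Fin n → RR F)) i))
    exact hi ▸ dLee_le_dHam_compCode C (hnz i)
  · obtain ⟨x, hx, hx0⟩ := exists_ne_zero_mem_compCode C (hnz 0)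
    obtain ⟨c, hc, hc0, -⟩ := exists_leeWt_eq_of_mem_compCode C hx hx0
    refine le_csInf ⟨_, c, ⟨hc, hc0⟩, rfl⟩ ?_
    rintro _ ⟨c, ⟨hc, hc0⟩, rfl⟩
    obtain ⟨i, hi⟩ := exists_dHam_compCode_le_leeWt hc hc0
    exact (Finset.inf'_le _ (Finset.mem_univ i)).trans hi

/-- `d_L(C) = min_{1 ≤ i ≤ 4} d_H(C_i)` (component codes nonzero). -/
theorem statement2 {p e n : ℕ} (hp : p.Prime) (he : 0 < e)
    (F : Type*) [Field F] [Fintype F] [DecidableEq F] (hcard : Fintype.card F = p ^ e)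
    (C : Submodule (RR F) (Fin n → RR F))
    (hnz : ∀ i, compCode (C : Set (Fin n → RR F)) i ≠ {0}) :
    dLee (C : Set (Fin n → RR F)) =
      Finset.univ.inf' Finset.univ_nonempty
        (fun i : Fin 4 => dHam (compCode (C : Set (Fin n → RR F)) i)) :=
  statement2_general F C hnz
end

section
/- Let C = γ_1C_1 ⊕ γ_2C_2 ⊕ γ_3C_3 ⊕ γ_4C_4 be a linear code of length n over R with component codes C_1, C_2, C_3, C_4, and let 0 ≤ l ≤ e−1. Then C^{⊥_l} = γ_1C_1^{⊥_l} ⊕ γ_2C_2^{⊥_l} ⊕ γ_3C_3^{⊥_l} ⊕ γ_4C_4^{⊥_l}, where C_i^{⊥_l} denotes the l-Galois dual of C_i in F_q^n. -/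
open scoped BigOperators

/-! Since `R ≅ F_q^4` with componentwise operations and `F^l(r) = r ^ p ^ l` componentwise,
the equation `[t, s]_l = 0` in `R` is the conjunction of the four equations
`⟨t_i, s_i⟩_l = 0` in `F_q`, one for each `γ`-component. -/

theorem sum_smul_gam {F : Type*} [Field F] (r : RR F) : ∑ i, r i • gam F i = r := by
  simp_rw [gam, ← Pi.single_smul', smul_eq_mul, mul_one]
  exact Finset.univ_sum_single r

theorem mem_galDualR_iff {F : Type*} [Field F] {n : ℕ} (pl : ℕ) (C : Set (Fin n → RR F))
    (s : Fin n → RR F) :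
    s ∈ galDualR pl C ↔ ∀ i, (fun j => s j i) ∈ galDualF pl (compCode C i) := by
  constructor
  · rintro hs i c ⟨t, ht, htc⟩
    obtain rfl : (fun j => t j i) = c := funext htc
    simpa only [Finset.sum_apply, Pi.mul_apply, Pi.pow_apply, Pi.zero_apply] using
      congrFun (hs t ht) i
  · intro hs t ht
    funext i
    simpa only [Finset.sum_apply, Pi.mul_apply, Pi.pow_apply, Pi.zero_apply] using
      hs i (fun j => t j i) ⟨t, ht, fun _ => rfl⟩

theorem statement4_general {p l n : ℕ}
    (F : Type*) [Field F]
    (C : Submodule (RR F) (Fin n → RR F)) :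
    galDualR (p ^ l) (C : Set (Fin n → RR F)) =
      {s | ∃ x : Fin 4 → (Fin n → F),
        (∀ i, x i ∈ galDualF (p ^ l) (compCode (C : Set (Fin n → RR F)) i)) ∧
        ∀ j, s j = ∑ i : Fin 4, x i j • gam F i} := by
  ext s
  rw [Set.mem_ofPred_eq, mem_galDualR_iff]
  constructor
  · intro hs
    exact ⟨fun i j => s j i, hs, fun j => (sum_smul_gam (s j)).symm⟩
  · rintro ⟨x, hx, hsx⟩
    have hs : s = fun j i => x i j := funext fun j => (hsx j).trans (sum_smul_gam _)
    exact hs ▸ hx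

/-- `C^{⊥_l} = γ_1C_1^{⊥_l} ⊕ γ_2C_2^{⊥_l} ⊕ γ_3C_3^{⊥_l} ⊕ γ_4C_4^{⊥_l}`. -/
theorem statement4 {p e l n : ℕ} (hp : p.Prime) (he : 0 < e) (hl : l < e)
    (F : Type*) [Field F] [Fintype F] (hcard : Fintype.card F = p ^ e)
    (C : Submodule (RR F) (Fin n → RR F)) :
    galDualR (p ^ l) (C : Set (Fin n → RR F)) =
      {s | ∃ x : Fin 4 → (Fin n → F),
        (∀ i, x i ∈ galDualF (p ^ l) (compCode (C : Set (Fin n → RR F)) i)) ∧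
        ∀ j, s j = ∑ i : Fin 4, x i j • gam F i} :=
  statement4_general F C
end

section
/- For every linear code C of length n over R and every 0 ≤ l ≤ e−1, ρ(C^{⊥_l}) = ρ(C)^{⊥_l}, where ρ(C)^{⊥_l} is the l-Galois dual of the F_q-linear code ρ(C) ⊆ F_q^{4n}. -/
open scoped BigOperators

/- Multiplying by the idempotent `γ_i = Pi.single i 1` keeps a codeword in the submodule `C`
and isolates the `i`-th component of the `R`-valued inner product; hence an `R`-valued inner
product vanishes against all of `C` as soon as the sum of its components (the inner product of
the Gray images) does. Componentwise, the Frobenius power of `R` is that of `F_q`. -/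

section ComponentPairing

variable {ι κ A : Type*} [Fintype ι] [CommSemiring A]

theorem sum_mul_apply (t w : ι → κ → A) (i : κ) :
    (∑ j, t j * w j) i = ∑ j, t j i * w j i := by
  simp only [Finset.sum_apply, Pi.mul_apply]

theorem sum_uncurry_mul [Fintype κ] (t w : ι → κ → A) :
    ∑ ji : ι × κ, Function.uncurry t ji * Function.uncurry w ji =
      ∑ i, (∑ j, t j * w j) i := by
  simp only [sum_mul_apply, Fintype.sum_prod_type, Function.uncurry_apply_pair]
  exact Finset.sum_comm

theorem forall_mem_sum_mul_eq_zero_iff [Fintype κ] [DecidableEq κ]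
    (C : Submodule (κ → A) (ι → κ → A)) (w : ι → κ → A) :
    (∀ t ∈ C, ∑ j, t j * w j = 0) ↔ ∀ t ∈ C, ∑ i, (∑ j, t j * w j) i = 0 := by
  refine ⟨fun h t ht => by simp only [h t ht, Pi.zero_apply, Finset.sum_const_zero],
    fun h t ht => funext fun i => ?_⟩
  set γ : κ → A := Pi.single i 1
  have hproj : ∑ j, (γ • t) j * w j = γ * ∑ j, t j * w j := by
    simp only [Finset.mul_sum, Pi.smul_apply, smul_eq_mul, mul_assoc]
  simpa [γ, hproj, Pi.single_apply, Pi.zero_apply] using h _ (C.smul_mem γ ht)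

end ComponentPairing

theorem gray_bijective {F : Type*} [Field F] {n : ℕ} :
    Function.Bijective (gray : (Fin n → RR F) → Fin n × Fin 4 → F) :=
  ⟨fun _ _ h => funext fun j => funext fun i => congrFun h (j, i),
    fun x => ⟨fun j i => x (j, i), rfl⟩⟩

theorem gray_mem_galDualF_image_iff {F : Type*} [Field F] {n : ℕ} (k : ℕ)
    (C : Set (Fin n → RR F)) (s : Fin n → RR F) :
    gray s ∈ galDualF k (gray '' C) ↔ ∀ t ∈ C, ∑ i, (∑ j, t j * s j ^ k) i = 0 := by
  simp only [galDualF, Set.mem_ofPred_eq, Set.forall_mem_image]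
  exact forall₂_congr fun t _ => by rw [← sum_uncurry_mul]; rfl

theorem statement9_general {p l n : ℕ}
    (F : Type*) [Field F]
    (C : Submodule (RR F) (Fin n → RR F)) :
    gray '' galDualR (p ^ l) (C : Set (Fin n → RR F)) =
      galDualF (p ^ l) (gray '' (C : Set (Fin n → RR F))) := by
  ext x
  obtain ⟨s, rfl⟩ := gray_bijective.2 x
  rw [gray_bijective.1.mem_set_image, gray_mem_galDualF_image_iff]
  exact forall_mem_sum_mul_eq_zero_iff C fun j => s j ^ p ^ l

/-- `ρ(C^{⊥_l}) = ρ(C)^{⊥_l}`. -/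
theorem statement9 {p e l n : ℕ} (hp : p.Prime) (he : 0 < e) (hl : l < e)
    (F : Type*) [Field F] [Fintype F] (hcard : Fintype.card F = p ^ e)
    (C : Submodule (RR F) (Fin n → RR F)) :
    gray '' galDualR (p ^ l) (C : Set (Fin n → RR F)) =
      galDualF (p ^ l) (gray '' (C : Set (Fin n → RR F))) :=
  statement9_general F C
end

section
/- Let C be a linear code of length n over R and 0 ≤ l ≤ e−1. Then C is an l-Galois LCD code over R if and only if ρ(C) is an l-Galois LCD code over F_q (as an F_q-linear code of length 4n). -/
open scoped BigOperators

section GaloisDualGray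

variable {F : Type*} [Field F] {n : ℕ}

lemma gray_injective : Function.Injective (gray : (Fin n → RR F) → Fin n × Fin 4 → F) :=
  fun _ _ h => funext fun j => funext fun i => congrFun h (j, i)

lemma gray_zero : gray (0 : Fin n → RR F) = 0 := rfl

lemma sum_gray_mul_gray_pow (pl : ℕ) (t c : Fin n → RR F) :
    ∑ ji, gray t ji * gray c ji ^ pl = ∑ i, (∑ j, t j * c j ^ pl) i := by
  rw [Fintype.sum_prod_type, Finset.sum_comm]
  simp [gray, Finset.sum_apply]

lemma sum_gam_mul_apply (i : Fin 4) (v : RR F) : ∑ k, (gam F i * v) k = v i := by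
  simp [gam, Pi.single_apply]

/-- Multiplying a codeword by the idempotent `γ_i` isolates the `i`-th component of the
`R`-valued inner product, so the `F_q`-valued inner products with `ρ(C)` detect all of it. -/
lemma gray_mem_galDualF_iff (pl : ℕ) (C : Submodule (RR F) (Fin n → RR F))
    (c : Fin n → RR F) :
    gray c ∈ galDualF pl (gray '' (C : Set (Fin n → RR F))) ↔
      c ∈ galDualR pl (C : Set (Fin n → RR F)) := by
  constructor
  · intro hc t ht
    funext i
    have hγt := hc _ ⟨gam F i • t, C.smul_mem _ ht, rfl⟩
    have hfactor : ∑ j, (gam F i • t) j * c j ^ pl = gam F i * ∑ j, t j * c j ^ pl := by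
      simp only [Pi.smul_apply, smul_eq_mul, Finset.mul_sum, mul_assoc]
    rwa [sum_gray_mul_gray_pow, hfactor, sum_gam_mul_apply] at hγt
  · rintro hc _ ⟨t, ht, rfl⟩
    rw [sum_gray_mul_gray_pow, hc t ht]
    simp

lemma image_gray_inter_galDualR (pl : ℕ) (C : Submodule (RR F) (Fin n → RR F)) :
    gray '' ((C : Set (Fin n → RR F)) ∩ galDualR pl C) =
      gray '' (C : Set (Fin n → RR F)) ∩ galDualF pl (gray '' (C : Set (Fin n → RR F))) := by
  ext x
  constructor
  · rintro ⟨c, ⟨hc, hcd⟩, rfl⟩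
    exact ⟨⟨c, hc, rfl⟩, (gray_mem_galDualF_iff pl C c).2 hcd⟩
  · rintro ⟨⟨c, hc, rfl⟩, hcd⟩
    exact ⟨c, ⟨hc, (gray_mem_galDualF_iff pl C c).1 hcd⟩, rfl⟩

end GaloisDualGray

theorem statement10_general {p l n : ℕ}
    (F : Type*) [Field F]
    (C : Submodule (RR F) (Fin n → RR F)) :
    (C : Set (Fin n → RR F)) ∩ galDualR (p ^ l) (C : Set (Fin n → RR F)) = {0} ↔
      gray '' (C : Set (Fin n → RR F)) ∩
        galDualF (p ^ l) (gray '' (C : Set (Fin n → RR F))) = {0} := by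
  rw [← image_gray_inter_galDualR, ← gray_injective.image_injective.eq_iff,
    Set.image_singleton, gray_zero]

/-- `C` is `l`-Galois LCD over `R` iff `ρ(C)` is `l`-Galois LCD over `F_q`. -/
theorem statement10 {p e l n : ℕ} (hp : p.Prime) (he : 0 < e) (hl : l < e)
    (F : Type*) [Field F] [Fintype F] (hcard : Fintype.card F = p ^ e)
    (C : Submodule (RR F) (Fin n → RR F)) :
    (C : Set (Fin n → RR F)) ∩ galDualR (p ^ l) (C : Set (Fin n → RR F)) = {0} ↔
      gray '' (C : Set (Fin n → RR F)) ∩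
        galDualF (p ^ l) (gray '' (C : Set (Fin n → RR F))) = {0} :=
  statement10_general F C
end

section
/- Let P be an m × m matrix over F_q and let t be an integer with 0 ≤ t ≤ m − 1 such that det(P_J) = 0 for every J ⊆ {1,…,m} with 0 ≤ |J| ≤ t. Then for every b ∈ F_q^m with support S and Hamming weight w satisfying 1 ≤ w ≤ t + 1, one has det(P + diag_m[b]) = (∏_{i∈S} b_i) · det(P_S). -/
open scoped BigOperators

namespace Matrix

variable {n R : Type*} [Fintype n] [DecidableEq n] [CommRing R]

theorem det_of_piecewise_one_row (A : Matrix n n R) (s : Finset n) :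
    det (of (s.piecewise (1 : Matrix n n R).row A.row)) =
      det (A.submatrix ((↑) : {i // i ∉ s} → n) (↑)) := by
  rw [← Finset.piecewise_compl, det_piecewise_one_eq_submatrix_det,
    ← det_submatrix_equiv_self (Equiv.subtypeEquivRight fun _ => Finset.mem_compl)]
  rfl

/-- Row `i` of `A + diagonal d` is `A i + d i • eᵢ`; expanding multilinearly, choosing `d i • eᵢ`
for `i ∈ s` contributes `d i` and deletes row and column `i`. -/
theorem det_add_diagonal (A : Matrix n n R) (d : n → R) :
    det (A + diagonal d) =
      ∑ s : Finset n, (∏ i ∈ s, d i) * det (A.submatrix ((↑) : {i // i ∉ s} → n) (↑)) := by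
  have hsplit : det (A + diagonal d) = detRowAlternating ((diagonal d).row + A.row) := by
    rw [add_comm]; rfl
  rw [hsplit, AlternatingMap.map_add_univ]
  refine Finset.sum_congr rfl fun s _ => ?_
  have hrows : s.piecewise (diagonal d).row A.row =
      s.piecewise (fun i => d i • s.piecewise (1 : Matrix n n R).row A.row i)
        (s.piecewise (1 : Matrix n n R).row A.row) := by
    ext i j
    by_cases hi : i ∈ s <;> simp [hi, row_apply, diagonal_apply, one_apply]
  rw [hrows, ← AlternatingMap.coe_multilinearMap, MultilinearMap.map_piecewise_smul, smul_eq_mul,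
    AlternatingMap.coe_multilinearMap, ← det_of_piecewise_one_row]
  rfl

/-- Of the expansion `det_add_diagonal`, only the term `s = S` survives: larger or incomparable `s`
pick up a zero entry of `d`, and the minors for `s ⊂ S` vanish. -/
theorem det_add_diagonal_of_ssubset_minors_eq_zero {A : Matrix n n R} {d : n → R} {S : Finset n}
    (hd : ∀ i ∉ S, d i = 0)
    (hminors : ∀ s ⊂ S, det (A.submatrix ((↑) : {i // i ∉ s} → n) (↑)) = 0) :
    det (A + diagonal d) = (∏ i ∈ S, d i) * det (A.submatrix ((↑) : {i // i ∉ S} → n) (↑)) := by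
  rw [det_add_diagonal, Finset.sum_eq_single_of_mem S (Finset.mem_univ S)]
  intro s _ hsS
  by_cases hsub : s ⊆ S
  · exact mul_eq_zero_of_right _ (hminors s (Finset.ssubset_iff_subset_ne.2 ⟨hsub, hsS⟩))
  · obtain ⟨i, his, hiS⟩ := Finset.not_subset.1 hsub
    exact mul_eq_zero_of_left (Finset.prod_eq_zero his (hd i hiS)) _

end Matrix

theorem statement11_general {m t : ℕ} (F : Type*) [Field F]
    (P : Matrix (Fin m) (Fin m) F)
    (hvanish : ∀ J : Finset (Fin m), J.card ≤ t → (minorOff P J).det = 0)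
    (b : Fin m → F) (S : Finset (Fin m)) (hS : ∀ i, i ∈ S ↔ b i ≠ 0)
    (hw2 : S.card ≤ t + 1) :
    (P + Matrix.diagonal b).det = (∏ i ∈ S, b i) * (minorOff P S).det := by
  refine Matrix.det_add_diagonal_of_ssubset_minors_eq_zero (fun i hi => ?_) fun s hs => ?_
  · exact not_not.1 (mt (hS i).2 hi)
  · have hcard := Finset.card_lt_card hs
    exact hvanish s (by omega)

/-- the determinant lemma
`det(P + diag_m[b]) = (∏_{i∈S} b_i) · det(P_S)`. -/
theorem statement11 {m t : ℕ} (F : Type*) [Field F] [Fintype F] [DecidableEq F]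
    (P : Matrix (Fin m) (Fin m) F) (ht : t + 1 ≤ m)
    (hvanish : ∀ J : Finset (Fin m), J.card ≤ t → (minorOff P J).det = 0)
    (b : Fin m → F) (S : Finset (Fin m)) (hS : ∀ i, i ∈ S ↔ b i ≠ 0)
    (hw1 : 1 ≤ S.card) (hw2 : S.card ≤ t + 1) :
    (P + Matrix.diagonal b).det = (∏ i ∈ S, b i) * (minorOff P S).det :=
  statement11_general F P hvanish b S hS hw2
end

section
/- Let C = γ_1C_1 ⊕ γ_2C_2 ⊕ γ_3C_3 ⊕ γ_4C_4 be a linear code of length n over R whose component codes C_i have generator matrices G_i = [I_{k_i} : M_i] in standard form (k_i × n matrices of rank k_i whose rows form a basis of C_i). Let P_i = G_iG_i^T, and suppose for each i = 1,2,3,4 there is an integer t_i with 0 ≤ t_i ≤ k_i − 1 such that det((P_i)_{S_i}) = 0 for every S_i ⊆ {1,…,k_i} with 0 ≤ |S_i| ≤ t_i, and there exists R_i ⊆ {1,…,k_i} with |R_i| = t_i + 1 and det((P_i)_{R_i}) ≠ 0. Let α = (α_1,…,α_n) ∈ R^n, with α_j = Σ_{i=1}^4 γ_i α_{ji}, satisfy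 α_{ji} ∈ F_q \ {1, −1} for j ∈ R_i and α_{ji} ∈ {1, −1} for j ∈ {1,…,n} \ R_i, for each i = 1,2,3,4. Then C^α is a Euclidean LCD code over R. -/
open scoped BigOperators

/-! Since `R ≅ F_q^4`, a word of `C^α ∩ (C^α)^⊥` vanishes iff each of its `γ`-components does,
and the `i`-th component lies in `D ∩ D^⊥` for the code `D` over `F_q` generated by
`H = G_i · diag(α_{·i})`; such a component is `0` as soon as `det(H Hᵀ) ≠ 0`. Because `G_i` is in
standard form and `α_{ji}² = 1` off the pivot columns indexed by `R_i`,
`H Hᵀ = P_i + diag(α_{ri}² - 1)`. Expanding `det(P + diag d) = ∑_S (∏_{r ∈ S} d_r) det(P_S)`, only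
the term `S = R_i` survives: proper subsets of `R_i` have vanishing minors and every other `S`
meets the zeros of `d`. -/

open Matrix

section Minors

variable {F : Type*} [Field F] {m : ℕ}

lemma det_rows_single_eq_det_minorOff (P : Matrix (Fin m) (Fin m) F)
    (S : Finset (Fin m)) :
    (of fun r => if r ∈ S then Pi.single r 1 else P r).det = (minorOff P S).det := by
  set M : Matrix (Fin m) (Fin m) F := of fun r => if r ∈ S then Pi.single r 1 else P r
  have hblock : M.submatrix (Equiv.sumCompl (· ∈ S)) (Equiv.sumCompl (· ∈ S)) =
      fromBlocks 1 0 (of fun (a : {i // i ∉ S}) (b : {i // i ∈ S}) => P a b) (minorOff P S) := by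
    ext (a | a) (b | b)
    · simp only [M, submatrix_apply, Equiv.sumCompl_apply_inl, of_apply, a.2, if_true,
        fromBlocks_apply₁₁, one_apply, Pi.single_apply, Subtype.ext_iff, @eq_comm _ (b : Fin m)]
    · have hba : (b : Fin m) ≠ a := fun h => b.2 (h ▸ a.2)
      simp [M, a.2, hba]
    · simp [M, a.2]
    · simp [M, minorOff, a.2]
  rw [← det_submatrix_equiv_self (Equiv.sumCompl (· ∈ S)) M, hblock, det_fromBlocks_zero₁₂,
    det_one, one_mul]

lemma det_add_diagonal_eq_sum (P : Matrix (Fin m) (Fin m) F) (d : Fin m → F) :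
    (P + diagonal d).det = ∑ S : Finset (Fin m), (∏ r ∈ S, d r) * (minorOff P S).det := by
  have hP : P + diagonal d = fun r => diagonal d r + P r := add_comm _ _
  have hS : ∀ S : Finset (Fin m), S.piecewise (fun r => diagonal d r) (fun r => P r) =
      S.piecewise (fun r => d r • (if r ∈ S then Pi.single r 1 else P r))
        (fun r => if r ∈ S then Pi.single r 1 else P r) := by
    intro S
    ext r s
    by_cases hr : r ∈ S
    · by_cases hrs : r = s
      · subst hrs; simp [hr]
      · simp [hr, hrs, Ne.symm hrs]
    · simp [hr]
  rw [det, hP]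
  refine ((detRowAlternating (n := Fin m) (R := F)).toMultilinearMap.map_add_univ
    (fun r => diagonal d r) (fun r => P r)).trans (Finset.sum_congr rfl fun S _ => ?_)
  rw [AlternatingMap.coe_multilinearMap, hS]
  exact ((detRowAlternating (n := Fin m) (R := F)).map_piecewise_smul d _ S).trans
    (by rw [smul_eq_mul, ← det_rows_single_eq_det_minorOff]; rfl)

lemma det_add_diagonal_ne_zero (P : Matrix (Fin m) (Fin m) F) {d : Fin m → F}
    {R : Finset (Fin m)} (hd0 : ∀ r ∉ R, d r = 0) (hd : ∀ r ∈ R, d r ≠ 0)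
    (hvan : ∀ S ⊂ R, (minorOff P S).det = 0) (hR : (minorOff P R).det ≠ 0) :
    (P + diagonal d).det ≠ 0 := by
  rw [det_add_diagonal_eq_sum, Finset.sum_eq_single_of_mem R (Finset.mem_univ R)]
  · exact mul_ne_zero (Finset.prod_ne_zero_iff.mpr hd) hR
  · intro S _ hSR
    by_cases hsub : S ⊆ R
    · rw [hvan S (hsub.ssubset_of_ne hSR), mul_zero]
    · obtain ⟨r, hrS, hrR⟩ := Finset.not_subset.mp hsub
      rw [Finset.prod_eq_zero hrS (hd0 r hrR), zero_mul]

end Minors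

section Pivots

variable {F κ ν : Type*} [Field F] [Fintype κ] [DecidableEq κ] [Fintype ν] [DecidableEq ν]
  {G : Matrix κ ν F} {ι : κ → ν}

lemma mul_diagonal_mul_transpose_of_pivots (hpiv : ∀ r s, G r (ι s) = if r = s then 1 else 0)
    {b : ν → F} (hb : ∀ j ∉ Set.range ι, b j = 0) :
    G * diagonal b * Gᵀ = diagonal (b ∘ ι) := by
  ext r s
  rw [mul_apply, Finset.sum_eq_single (ι r)]
  · by_cases hrs : r = s
    · subst hrs; simp [hpiv]
    · simp [hpiv, hrs, Ne.symm hrs]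
  · intro j _ hj
    by_cases hjι : j ∈ Set.range ι
    · obtain ⟨t, rfl⟩ := hjι
      have hrt : r ≠ t := fun h => hj (h ▸ rfl)
      simp [hpiv, hrt]
    · simp [hb j hjι]
  · simp

lemma scaled_gram_eq_add_diagonal (hpiv : ∀ r s, G r (ι s) = if r = s then 1 else 0)
    {a : ν → F} (ha : ∀ j ∉ Set.range ι, a j * a j = 1) :
    G * diagonal a * (G * diagonal a)ᵀ =
      G * Gᵀ + diagonal fun r => a (ι r) * a (ι r) - 1 := by
  have hsplit : diagonal a * (diagonal a)ᵀ = 1 + diagonal fun j => a j * a j - 1 := by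
    rw [diagonal_transpose, diagonal_mul_diagonal, ← diagonal_one, diagonal_add]
    simp
  rw [transpose_mul, Matrix.mul_assoc, ← Matrix.mul_assoc (diagonal a), hsplit, Matrix.add_mul,
    Matrix.mul_add, Matrix.one_mul, ← Matrix.mul_assoc,
    mul_diagonal_mul_transpose_of_pivots hpiv (fun j hj => by simp [ha j hj])]
  rfl

end Pivots

lemma eq_zero_of_mem_span_rows_of_mulVec_eq_zero {F κ ν : Type*} [Field F] [Fintype κ]
    [DecidableEq κ] [Fintype ν] {H : Matrix κ ν F} (hH : (H * Hᵀ).det ≠ 0) {x : ν → F}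
    (hx : x ∈ Submodule.span F (Set.range H.row)) (horth : H *ᵥ x = 0) : x = 0 := by
  obtain ⟨w, rfl⟩ : ∃ w, w ᵥ* H = x := by
    rwa [← range_vecMulLinear] at hx
  have hw : (H * Hᵀ) *ᵥ w = 0 := by rw [← mulVec_mulVec, mulVec_transpose, horth]
  rw [eq_zero_of_mulVec_eq_zero hH hw, zero_vecMul]

lemma det_scaled_gram_ne_zero {F ν : Type*} [Field F] [Fintype ν] [DecidableEq ν] {k : ℕ}
    {G : Matrix (Fin k) ν F} {ι : Fin k → ν} (hpiv : ∀ r s, G r (ι s) = if r = s then 1 else 0)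
    {R : Finset (Fin k)} (hvan : ∀ S ⊂ R, (minorOff (G * Gᵀ) S).det = 0)
    (hR : (minorOff (G * Gᵀ) R).det ≠ 0) {a : ν → F}
    (ha1 : ∀ s ∈ R, a (ι s) ≠ 1 ∧ a (ι s) ≠ -1)
    (ha2 : ∀ j, (∀ s ∈ R, ι s ≠ j) → a j = 1 ∨ a j = -1) :
    (G * diagonal a * (G * diagonal a)ᵀ).det ≠ 0 := by
  have hι : Function.Injective ι := fun s s' h => by
    by_contra hne
    have h1 := hpiv s s'
    rw [← h, hpiv, if_pos rfl, if_neg hne] at h1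
    exact one_ne_zero h1
  have ha : ∀ j ∉ Set.range ι, a j * a j = 1 := fun j hj =>
    mul_self_eq_one_iff.mpr (ha2 j fun s _ h => hj ⟨s, h⟩)
  rw [scaled_gram_eq_add_diagonal hpiv ha]
  refine det_add_diagonal_ne_zero _ (fun r hr => ?_) (fun r hr => ?_) hvan hR
  · rw [sub_eq_zero, mul_self_eq_one_iff]
    exact ha2 _ fun s hs h => hr (hι h ▸ hs)
  · rw [Ne, sub_eq_zero, mul_self_eq_one_iff, not_or]
    exact ha1 r hr

lemma mul_mem_span_rows_mul_diagonal {F κ ν : Type*} [Field F] [Fintype κ] [Fintype ν]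
    [DecidableEq ν] {G : Matrix κ ν F} {x : ν → F} (hx : x ∈ Submodule.span F (Set.range G.row))
    (a : ν → F) : (fun j => a j * x j) ∈ Submodule.span F (Set.range (G * diagonal a).row) := by
  rw [← range_vecMulLinear] at hx ⊢
  obtain ⟨w, rfl⟩ := hx
  refine ⟨w, ?_⟩
  ext j
  simp [← vecMul_vecMul, vecMul_diagonal, mul_comm]

lemma mulVec_comp_eq_zero_of_mem_euclDualR {F κ : Type*} [Field F] [Fintype κ] {n : ℕ}
    {C : Set (Fin n → RR F)} {α x : Fin n → RR F} (hx : x ∈ euclDualR (scaleCode α C))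
    {i : Fin 4} {H : Matrix κ (Fin n) F} (hH : ∀ r, H r ∈ compCode C i) :
    (H * diagonal fun j => α j i) *ᵥ (fun j => x j i) = 0 := by
  ext r
  obtain ⟨c, hc, hcr⟩ := hH r
  have h := congrFun (hx _ ⟨c, hc, rfl⟩) i
  simp only [Finset.sum_apply, Pi.mul_apply, Pi.zero_apply] at h
  rw [Pi.zero_apply, ← h, mulVec, dotProduct]
  refine Finset.sum_congr rfl fun j _ => ?_
  rw [mul_diagonal, ← hcr j]
  ring

open Matrix in
theorem statement12_general {n : ℕ}
    (F : Type*) [Field F]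
    (k : Fin 4 → ℕ) (hkn : ∀ i, k i ≤ n)
    (G : ∀ i, Matrix (Fin (k i)) (Fin n) F)
    (C : Submodule (RR F) (Fin n → RR F))
    (hC : ∀ i, compCode (C : Set (Fin n → RR F)) i =
      (Submodule.span F (Set.range (fun r : Fin (k i) => G i r)) : Set (Fin n → F)))
    -- standard form `G_i = [I_{k_i} : M_i]`:
    (hstd : ∀ i, ∀ r s : Fin (k i), G i r (Fin.castLE (hkn i) s) = if r = s then 1 else 0)
    (t : Fin 4 → ℕ)
    (hvanish : ∀ i, ∀ S : Finset (Fin (k i)), S.card ≤ t i →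
      (minorOff (G i * (G i)ᵀ) S).det = 0)
    (R : ∀ i, Finset (Fin (k i))) (hRcard : ∀ i, (R i).card = t i + 1)
    (hRdet : ∀ i, (minorOff (G i * (G i)ᵀ) (R i)).det ≠ 0)
    (α : Fin n → RR F)
    -- `α_{ji} ∈ F_q \ {1, −1}` for `j ∈ R_i`:
    (hα1 : ∀ i, ∀ s ∈ R i,
      α (Fin.castLE (hkn i) s) i ≠ 1 ∧ α (Fin.castLE (hkn i) s) i ≠ -1)
    -- `α_{ji} ∈ {1, −1}` for `j ∉ R_i`:
    (hα2 : ∀ (i : Fin 4) (j : Fin n), (∀ s ∈ R i, Fin.castLE (hkn i) s ≠ j) →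
      α j i = 1 ∨ α j i = -1) :
    scaleCode α (C : Set (Fin n → RR F)) ∩
      euclDualR (scaleCode α (C : Set (Fin n → RR F))) = {0} := by
  refine Set.eq_singleton_iff_unique_mem.mpr
    ⟨⟨⟨0, C.zero_mem, funext fun j => mul_zero (α j)⟩, fun _ _ => by simp⟩, ?_⟩
  rintro _ ⟨⟨c, hc, rfl⟩, hx⟩
  ext j i
  have hvan : ∀ S ⊂ R i, (minorOff (G i * (G i)ᵀ) S).det = 0 := fun S hS =>
    hvanish i S (by have := Finset.card_lt_card hS; have := hRcard i; omega)
  have hdet := det_scaled_gram_ne_zero (hstd i) hvan (hRdet i) (hα1 i) (hα2 i)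
  have hci : (fun j => c j i) ∈ Submodule.span F (Set.range fun r => G i r) := by
    rw [← SetLike.mem_coe, ← hC i]
    exact ⟨c, hc, fun _ => rfl⟩
  have hrows : ∀ r, G i r ∈ compCode (C : Set (Fin n → RR F)) i := fun r => by
    rw [hC i]
    exact Submodule.subset_span ⟨r, rfl⟩
  exact congrFun (eq_zero_of_mem_span_rows_of_mulVec_eq_zero hdet
    (mul_mem_span_rows_mul_diagonal hci _) (mulVec_comp_eq_zero_of_mem_euclDualR hx hrows)) j

open Matrix in
/-- construction of Euclidean LCD codes `C^α` over `R` from a linear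
code `C = γ_1C_1 ⊕ γ_2C_2 ⊕ γ_3C_3 ⊕ γ_4C_4` with generator matrices
`G_i = [I_{k_i} : M_i]`, `P_i = G_iG_iᵀ`. -/
theorem statement12 {p e n : ℕ} (hp : p.Prime) (he : 0 < e)
    (F : Type*) [Field F] [Fintype F] (hcard : Fintype.card F = p ^ e)
    (k : Fin 4 → ℕ) (hkn : ∀ i, k i ≤ n)
    (G : ∀ i, Matrix (Fin (k i)) (Fin n) F)
    -- the rows of `G i` form a basis of `C_i` (`G i` has rank `k i`):
    (hGli : ∀ i, LinearIndependent F (fun r : Fin (k i) => G i r))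
    (C : Submodule (RR F) (Fin n → RR F))
    (hC : ∀ i, compCode (C : Set (Fin n → RR F)) i =
      (Submodule.span F (Set.range (fun r : Fin (k i) => G i r)) : Set (Fin n → F)))
    -- standard form `G_i = [I_{k_i} : M_i]`:
    (hstd : ∀ i, ∀ r s : Fin (k i), G i r (Fin.castLE (hkn i) s) = if r = s then 1 else 0)
    (t : Fin 4 → ℕ) (ht : ∀ i, t i + 1 ≤ k i)
    (hvanish : ∀ i, ∀ S : Finset (Fin (k i)), S.card ≤ t i →
      (minorOff (G i * (G i)ᵀ) S).det = 0)
    (R : ∀ i, Finset (Fin (k i))) (hRcard : ∀ i, (R i).card = t i + 1)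
    (hRdet : ∀ i, (minorOff (G i * (G i)ᵀ) (R i)).det ≠ 0)
    (α : Fin n → RR F)
    -- `α_{ji} ∈ F_q \ {1, −1}` for `j ∈ R_i`:
    (hα1 : ∀ i, ∀ s ∈ R i,
      α (Fin.castLE (hkn i) s) i ≠ 1 ∧ α (Fin.castLE (hkn i) s) i ≠ -1)
    -- `α_{ji} ∈ {1, −1}` for `j ∉ R_i`:
    (hα2 : ∀ (i : Fin 4) (j : Fin n), (∀ s ∈ R i, Fin.castLE (hkn i) s ≠ j) →
      α j i = 1 ∨ α j i = -1) :
    scaleCode α (C : Set (Fin n → RR F)) ∩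
      euclDualR (scaleCode α (C : Set (Fin n → RR F))) = {0} :=
  statement12_general F k hkn G C hC hstd t hvanish R hRcard hRdet α hα1 hα2
end

section
/- Suppose q > 3. Let C be a linear code of length n over R. Then there exists α = (α_1,…,α_n) ∈ R^n with every α_j a unit of R such that C^α is a Euclidean LCD code over R; in particular |C^α| = |C| and, if C ≠ {0}, d_L(C^α) = d_L(C), so C^α is equivalent to C with the same parameters. -/
open scoped BigOperators

/-!
Since `R ≅ F_q^4`, a code over `R` splits into four component codes over `F_q`; scaling by a
vector of units acts on each of them by a vector of nonzero scalars, and preserves size and Lee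
weight. So it suffices to scale a code `D ⊆ F_q^n` into an LCD code, i.e. to find nonzero `a` such
that the weighted form `∑ a_j² x_j y_j` is nondegenerate on `D`. The Gram determinant of this form
is affine in each weight `a_j²` and does not vanish for the indicator of an information set of
`D`; hence it does not vanish at some point of `Tⁿ` for any `T` with two elements, and for
`q > 3` there are two distinct nonzero squares.
-/

open Matrix

theorem Matrix.exists_det_add_smul_vecMulVec {m R : Type*} [Fintype m] [DecidableEq m] [CommRing R]
    (A : Matrix m m R) (u w : m → R) :
    ∃ c, ∀ t : R, (A + t • vecMulVec u w).det = A.det + t * c := by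
  let N : R → Matrix (m ⊕ Unit) (m ⊕ Unit) R := fun t =>
    fromBlocks A (replicateCol Unit (-(t • u))) (replicateRow Unit w) 1
  -- Schur complement in the last block; `t` enters `N t` only through its last column.
  have hN : ∀ t, (N t).det = (A + t • vecMulVec u w).det := fun t => by
    rw [det_fromBlocks_one₂₂]
    congr 1
    ext i j
    simp [vecMulVec, mul_apply, mul_assoc]
  have hcol : ∀ t, N t = (N 0).updateCol (Sum.inr ())
      ((fun i => N 0 i (Sum.inr ())) + t • Sum.elim (-u) 0) := fun t => by
    ext (i | i) (j | j) <;> simp [N]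
  refine ⟨((N 0).updateCol (Sum.inr ()) (Sum.elim (-u) 0)).det, fun t => ?_⟩
  rw [← hN, hcol, det_updateCol_add, det_updateCol_smul, updateCol_eq_self, hN, zero_smul,
    add_zero]

theorem exists_forall_mem_ne_zero_of_affine {ι K : Type*} [Fintype ι] [DecidableEq ι]
    [CommRing K] [NoZeroDivisors K] {P : (ι → K) → K}
    (hP : ∀ (j : ι) (b : ι → K), ∃ α β : K, ∀ t, P (Function.update b j t) = α + β * t)
    {T : Set K} (hT : T.Nontrivial) {b₀ : ι → K} (h₀ : P b₀ ≠ 0) :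
    ∃ b : ι → K, (∀ j, b j ∈ T) ∧ P b ≠ 0 := by
  suffices ∀ S : Finset ι, ∃ b : ι → K, (∀ j ∈ S, b j ∈ T) ∧ P b ≠ 0 by
    simpa using this Finset.univ
  intro S
  induction S using Finset.induction_on with
  | empty => exact ⟨b₀, by simp, h₀⟩
  | @insert j S hj ih =>
    obtain ⟨b, hbT, hb⟩ := ih
    obtain ⟨α, β, hαβ⟩ := hP j b
    obtain ⟨t, htT, ht⟩ : ∃ t ∈ T, α + β * t ≠ 0 := by
      obtain ⟨t₁, h₁, t₂, h₂, hne⟩ := hT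
      by_contra! h
      have hβ : β = 0 := by
        have : β * (t₁ - t₂) = 0 := by linear_combination h t₁ h₁ - h t₂ h₂
        exact (mul_eq_zero.mp this).resolve_right (sub_ne_zero.mpr hne)
      have hα : α = 0 := by simpa [hβ] using h t₁ h₁
      apply hb
      simpa [hα, hβ] using hαβ (b j)
    refine ⟨Function.update b j t, fun i hi => ?_, by rwa [hαβ]⟩
    rcases eq_or_ne i j with rfl | hij
    · simpa using htT
    · simpa [hij] using hbT i ((Finset.mem_insert.mp hi).resolve_left hij)

section WeightedForm

variable {K V ι : Type*} [Field K] [AddCommGroup V] [Module K V] [Fintype ι]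

def weightedForm (u : ι → Module.Dual K V) (w : ι → K) : LinearMap.BilinForm K V :=
  ∑ j, w j • (u j).smulRight (u j)

variable {u : ι → Module.Dual K V}

@[simp]
theorem weightedForm_apply (w : ι → K) (x y : V) :
    weightedForm u w x y = ∑ j, w j * (u j x * u j y) := by
  simp [weightedForm]

theorem weightedForm_isRefl (w : ι → K) : LinearMap.IsRefl (weightedForm u w) := fun x y h => by
  simpa only [weightedForm_apply, mul_comm (u _ y)] using h

theorem weightedForm_update [DecidableEq ι] (w : ι → K) (j : ι) (t : K) :
    weightedForm u (Function.update w j t) =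
      weightedForm u (Function.update w j 0) + t • (u j).smulRight (u j) := by
  ext x y
  simp only [weightedForm_apply, LinearMap.add_apply, LinearMap.smul_apply,
    LinearMap.smulRight_apply, smul_eq_mul, Fintype.sum_eq_add_sum_compl j,
    Function.update_self, zero_mul, zero_add]
  rw [add_comm]
  congr 1
  refine Finset.sum_congr rfl fun i hi => ?_
  rw [Function.update_of_ne (Finset.mem_compl.mp hi ∘ Finset.mem_singleton.mpr),
    Function.update_of_ne (Finset.mem_compl.mp hi ∘ Finset.mem_singleton.mpr)]

theorem exists_nondegenerate_weightedForm (hu : ∀ x, (∀ j, u j x = 0) → x = 0) :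
    ∃ w, (weightedForm u w).Nondegenerate := by
  classical
  obtain ⟨κ, a, ha, hspan, hli⟩ := exists_linearIndependent' K u
  have : Fintype κ := Fintype.ofInjective a ha
  -- `S` is an information set: the `u j` with `j ∈ S` form a basis of the span of all of them.
  let S : Finset ι := Finset.univ.map ⟨a, ha⟩
  refine ⟨fun j => if j ∈ S then 1 else 0,
    (weightedForm_isRefl _).nondegenerate_iff_separatingLeft.mpr fun x hx => hu x ?_⟩
  have hsum : ∑ i, u (a i) x • u (a i) = 0 := by
    ext y
    have hxy := hx y
    simp only [weightedForm_apply, ite_mul, one_mul, zero_mul, Finset.sum_ite_mem,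
      Finset.univ_inter, Finset.sum_map, S] at hxy
    simpa using hxy
  have hxa : ∀ i, u (a i) x = 0 := Fintype.linearIndependent_iff.mp hli _ hsum
  have hker : Submodule.span K (Set.range u) ≤ LinearMap.ker (Module.Dual.eval K V x) := by
    rw [← hspan, Submodule.span_le]
    rintro _ ⟨i, rfl⟩
    exact hxa i
  exact fun j => hker (Submodule.subset_span ⟨j, rfl⟩)

theorem exists_forall_mem_nondegenerate_weightedForm [FiniteDimensional K V]
    (hu : ∀ x, (∀ j, u j x = 0) → x = 0) {T : Set K} (hT : T.Nontrivial) :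
    ∃ w, (∀ j, w j ∈ T) ∧ (weightedForm u w).Nondegenerate := by
  classical
  let b := Module.finBasis K V
  simp_rw [LinearMap.BilinForm.nondegenerate_iff_det_ne_zero b]
  obtain ⟨w₀, h₀⟩ := exists_nondegenerate_weightedForm hu
  refine exists_forall_mem_ne_zero_of_affine (fun j w => ?_) hT
    ((LinearMap.BilinForm.nondegenerate_iff_det_ne_zero b).mp h₀)
  set A := LinearMap.BilinForm.toMatrix b (weightedForm u (Function.update w j 0))
  set v : Fin (Module.finrank K V) → K := fun r => u j (b r)
  have hA : ∀ t, LinearMap.BilinForm.toMatrix b (weightedForm u (Function.update w j t)) =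
      A + t • vecMulVec v v := fun t => by
    rw [weightedForm_update, map_add, map_smul]
    congr 2
    ext r s
    simp [LinearMap.BilinForm.toMatrix_apply, vecMulVec, v]
  obtain ⟨c, hc⟩ := Matrix.exists_det_add_smul_vecMulVec A v v
  exact ⟨A.det, c, fun t => by rw [hA, hc, mul_comm]⟩

end WeightedForm

theorem nontrivial_image_sq_of_three_lt_card {K : Type*} [Field K] [Fintype K]
    (hK : 3 < Fintype.card K) : ((fun a : K => a ^ 2) '' {0}ᶜ).Nontrivial := by
  classical
  obtain ⟨a, -, ha⟩ := Finset.exists_mem_notMem_of_card_lt_card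
    (s := {0, 1, -1}) (t := Finset.univ) (Finset.card_le_three.trans_lt hK)
  simp only [Finset.mem_insert, Finset.mem_singleton, not_or] at ha
  refine ⟨1, ⟨1, one_ne_zero, one_pow 2⟩, a ^ 2, ⟨a, ha.1, rfl⟩, fun h => ?_⟩
  rcases sq_eq_one_iff.mp h.symm with h | h
  exacts [ha.2.1 h, ha.2.2 h]

def IsEuclideanLCD {K ι : Type*} [CommRing K] [Fintype ι] (D : Set (ι → K)) : Prop :=
  ∀ x ∈ D, (∀ y ∈ D, ∑ j, y j * x j = 0) → x = 0

theorem exists_isEuclideanLCD_scaleCodeF {K : Type*} [Field K] [Fintype K]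
    (hK : 3 < Fintype.card K) {n : ℕ} (D : Submodule K (Fin n → K)) :
    ∃ a : Fin n → K, (∀ j, a j ≠ 0) ∧ IsEuclideanLCD (scaleCodeF a D) := by
  let u : Fin n → Module.Dual K D := fun j => (LinearMap.proj j).comp D.subtype
  obtain ⟨w, hwT, hw⟩ := exists_forall_mem_nondegenerate_weightedForm (u := u)
    (fun x hx => Subtype.ext (funext hx)) (nontrivial_image_sq_of_three_lt_card hK)
  choose a ha0 haw using hwT
  refine ⟨a, ha0, ?_⟩
  rintro _ ⟨x, hx, rfl⟩ hxD
  suffices (⟨x, hx⟩ : D) = 0 by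
    rw [show x = 0 from congrArg Subtype.val this]
    funext j
    simp
  refine hw.2 _ fun y => ?_
  rw [← hxD _ ⟨y, y.2, rfl⟩, weightedForm_apply]
  refine Finset.sum_congr rfl fun j _ => ?_
  simp only [u, LinearMap.comp_apply, Submodule.subtype_apply, LinearMap.proj_apply, ← haw j]
  ring

theorem hammingNorm_mul_left_of_isUnit {ι K : Type*} [Fintype ι] [MonoidWithZero K]
    [DecidableEq K] {a : ι → K} (ha : IsUnit a) (x : ι → K) :
    hammingNorm (a * x) = hammingNorm x := by
  simp only [hammingNorm, Pi.mul_apply, ne_eq, (ha.apply _).mul_right_eq_zero]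

section CodesOverR

variable {F : Type*} [Field F] {n : ℕ}

def compSubmodule (C : Submodule (RR F) (Fin n → RR F)) (i : Fin 4) :
    Submodule F (Fin n → F) :=
  (C.restrictScalars F).map (LinearMap.compLeft (LinearMap.proj i) (Fin n))

theorem coe_compSubmodule (C : Submodule (RR F) (Fin n → RR F)) (i : Fin 4) :
    (compSubmodule C i : Set (Fin n → F)) = compCode (C : Set (Fin n → RR F)) i := by
  ext x
  simp [compSubmodule, compCode, funext_iff]

theorem compCode_scaleCode (α : Fin n → RR F) (C : Set (Fin n → RR F)) (i : Fin 4) :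
    compCode (scaleCode α C) i = scaleCodeF (fun j => α j i) (compCode C i) := by
  ext x
  simp only [compCode, scaleCode, scaleCodeF, Set.mem_image, Set.mem_ofPred_eq]
  constructor
  · rintro ⟨_, ⟨c, hc, rfl⟩, hcx⟩
    exact ⟨fun j => c j i, ⟨c, hc, fun _ => rfl⟩, funext hcx⟩
  · rintro ⟨_, ⟨c, hc, hcy⟩, rfl⟩
    exact ⟨_, ⟨c, hc, rfl⟩, fun j => by simp [← hcy j]⟩

theorem inter_euclDualR_eq_singleton_zero_of_compCode {C : Set (Fin n → RR F)}
    (h0 : 0 ∈ C) (hC : ∀ i, IsEuclideanLCD (compCode C i)) : C ∩ euclDualR C = {0} := by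
  refine Set.Subset.antisymm (fun z ⟨hzC, hz⟩ => ?_) (by simpa using ⟨h0, fun t _ => by simp⟩)
  funext j i
  refine congrFun (hC i (fun j => z j i) ⟨z, hzC, fun _ => rfl⟩ ?_) j
  rintro y ⟨t, htC, hty⟩
  simp only [← hty]
  simpa [Finset.sum_apply] using congrFun (hz t htC) i

variable [DecidableEq F] {α : Fin n → RR F}

theorem leeWt_scale (hα : ∀ j, IsUnit (α j)) (c : Fin n → RR F) :
    leeWt (fun j => α j * c j) = leeWt c :=
  Finset.sum_congr rfl fun j _ => hammingNorm_mul_left_of_isUnit (hα j) (c j)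

theorem dLee_scaleCode (hα : ∀ j, IsUnit (α j)) (C : Set (Fin n → RR F)) :
    dLee (scaleCode α C) = dLee C := by
  have hinj := (Pi.isUnit_iff.mpr hα).mul_right_injective
  unfold dLee scaleCode
  congr 1
  ext m
  simp only [Set.mem_image, Set.mem_sep_iff]
  constructor
  · rintro ⟨_, ⟨⟨c, hc, rfl⟩, hne⟩, rfl⟩
    exact ⟨c, ⟨hc, fun h => hne (by subst h; exact mul_zero α)⟩, (leeWt_scale hα c).symm⟩
  · rintro ⟨c, ⟨hc, hne⟩, rfl⟩
    exact ⟨_, ⟨⟨c, hc, rfl⟩, fun h => hne (hinj (h.trans (mul_zero α).symm))⟩, leeWt_scale hα c⟩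

end CodesOverR

theorem statement13_general {n : ℕ}
    (F : Type*) [Field F] [Fintype F] [DecidableEq F]
    (hq : 3 < Fintype.card F)
    (C : Submodule (RR F) (Fin n → RR F)) :
    ∃ α : Fin n → RR F, (∀ j, IsUnit (α j)) ∧
      scaleCode α (C : Set (Fin n → RR F)) ∩
        euclDualR (scaleCode α (C : Set (Fin n → RR F))) = {0} ∧
      Nat.card (scaleCode α (C : Set (Fin n → RR F))) = Nat.card C ∧
      ((C : Set (Fin n → RR F)) ≠ {0} →
        dLee (scaleCode α (C : Set (Fin n → RR F))) = dLee (C : Set (Fin n → RR F))) := by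
  choose a ha0 hlcd using fun i => exists_isEuclideanLCD_scaleCodeF hq (compSubmodule C i)
  let α : Fin n → RR F := fun j i => a i j
  have hα : ∀ j, IsUnit (α j) := fun j => Pi.isUnit_iff.mpr fun i => (ha0 i j).isUnit
  refine ⟨α, hα, ?_, Nat.card_image_of_injective (Pi.isUnit_iff.mpr hα).mul_right_injective _,
    fun _ => dLee_scaleCode hα _⟩
  refine inter_euclDualR_eq_singleton_zero_of_compCode ⟨0, C.zero_mem, mul_zero α⟩
    fun i => ?_
  rw [compCode_scaleCode, ← coe_compSubmodule]
  exact hlcd i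

/-- for `q > 3`, every linear code `C` over `R` is equivalent
(via scaling by a vector of units) to a Euclidean LCD code `C^α` with the same
cardinality and the same minimum Lee distance. -/
theorem statement13 {p e n : ℕ} (hp : p.Prime) (he : 0 < e)
    (F : Type*) [Field F] [Fintype F] [DecidableEq F] (hcard : Fintype.card F = p ^ e)
    (hq : 3 < Fintype.card F)
    (C : Submodule (RR F) (Fin n → RR F)) :
    ∃ α : Fin n → RR F, (∀ j, IsUnit (α j)) ∧
      scaleCode α (C : Set (Fin n → RR F)) ∩
        euclDualR (scaleCode α (C : Set (Fin n → RR F))) = {0} ∧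
      Nat.card (scaleCode α (C : Set (Fin n → RR F))) = Nat.card C ∧
      ((C : Set (Fin n → RR F)) ≠ {0} →
        dLee (scaleCode α (C : Set (Fin n → RR F))) = dLee (C : Set (Fin n → RR F))) :=
  statement13_general F hq C
end

section
/- Let 0 < l < e and suppose p^{e−l} + 1 divides p^e − 1; set β = (p^e − 1)/(p^{e−l} + 1) and (F_q^*)^β = {x^β : x ∈ F_q^*}. Let C ⊆ F_q^n be a linear code of dimension k with generator matrix G = [I_k : M] in standard form (a k × n matrix of rank k whose rows form a basis of C), and set P = G(F^{e−l}(G))^T, where F^{e−l}(G) is the entrywise p^{e−l}-th power of G. Let t be an integer with 0 ≤ t ≤ k − 1 such that det(P_I) = 0 for every I ⊆ {1,…,k} with 0 ≤ |I| ≤ t, and suppose there exists J ⊆ {1,…,k} with |J| = t + 1 and det(P_J) ≠ 0. Let a ∈ F_q^n satisfy a_j ∈ F_q \ (F_q^*)^β for j ∈ J and a_j ∈ (F_q^*)^β for j ∈ {1,…,n} \ J. Then C^a is an l-Galois LCD code over F_q. -/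
open scoped BigOperators

/-!
Scaling column `j` of `G` by `a_j` turns `P = G F^{e-l}(G)ᵀ` into
`G diag(a_j^{p^{e-l}+1}) F^{e-l}(G)ᵀ`. Since `β (p^{e-l}+1) = q - 1`, the factor
`a_j^{p^{e-l}+1}` equals `1` exactly when `a_j` is a nonzero `β`-th power, i.e. exactly for
`j ∉ J`. As the columns of `G` indexed by `J` are unit vectors, the new matrix is `P + diag d`
with `d` supported on `J` and nonzero there. Expanding `det (P + diag d)` in principal minors,
only `(∏_{j ∈ J} d_j) det P_J` survives, so it is invertible. Applying the Frobenius
`x ↦ x^{p^{e-l}}` entrywise shows that the `l`-Galois Gram matrix `G_a F^l(G_a)ᵀ` of `C^a` is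
invertible as well, and a code with invertible `l`-Galois Gram matrix is `l`-Galois LCD.
-/

open Matrix Submodule Set

section Determinant

variable {R : Type*} [CommRing R] {n : Type*} [Fintype n] [DecidableEq n]

theorem det_add_diagonal_eq_sum_det_submatrix (M : Matrix n n R) (d : n → R) :
    (M + diagonal d).det =
      ∑ s : Finset n, (∏ i ∈ sᶜ, d i) * (M.submatrix ((↑) : s → n) (↑)).det := by
  have hrows : M + diagonal d = of (M.row + fun i => d i • (1 : Matrix n n R).row i) := by
    ext i j
    simp [diagonal_apply, one_apply]
  have hsmul (s : Finset n) : s.piecewise M.row (fun i => d i • (1 : Matrix n n R).row i) =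
      fun i => (if i ∈ s then 1 else d i) • s.piecewise M.row (1 : Matrix n n R).row i := by
    ext i j
    by_cases hi : i ∈ s <;> simp [hi]
  rw [hrows]
  change detRowAlternating (M.row + _) = _
  rw [AlternatingMap.map_add_univ]
  refine Finset.sum_congr rfl fun s _ => ?_
  rw [hsmul, AlternatingMap.map_smul_univ, smul_eq_mul, ← det_piecewise_one_eq_submatrix_det]
  congr 1
  rw [Finset.prod_ite, Finset.prod_const_one, one_mul]
  congr 1
  ext i
  simp

end Determinant

section MinorOff

variable {F : Type*} [Field F] {m : ℕ}

theorem det_minorOff (P : Matrix (Fin m) (Fin m) F) (S : Finset (Fin m)) :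
    (minorOff P S).det = (P.submatrix ((↑) : ↥Sᶜ → Fin m) (↑)).det := by
  let e : {i // i ∉ S} ≃ ↥Sᶜ := Equiv.subtypeEquivRight fun _ => Finset.mem_compl.symm
  rw [← det_submatrix_equiv_self e]
  rfl

theorem det_add_diagonal_eq_sum_minorOff (P : Matrix (Fin m) (Fin m) F) (d : Fin m → F) :
    (P + diagonal d).det = ∑ S : Finset (Fin m), (∏ i ∈ S, d i) * (minorOff P S).det := by
  rw [det_add_diagonal_eq_sum_det_submatrix]
  refine (Fintype.sum_bijective Compl.compl compl_bijective _ _ fun S => ?_).symm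
  rw [compl_compl, det_minorOff]

theorem det_add_diagonal_eq_prod_mul_det_minorOff {P : Matrix (Fin m) (Fin m) F}
    {d : Fin m → F} {J : Finset (Fin m)} (hd : ∀ i ∉ J, d i = 0)
    (hP : ∀ S : Finset (Fin m), S.card < J.card → (minorOff P S).det = 0) :
    (P + diagonal d).det = (∏ i ∈ J, d i) * (minorOff P J).det := by
  rw [det_add_diagonal_eq_sum_minorOff, Finset.sum_eq_single J]
  · intro S _ hSJ
    by_cases hsub : S ⊆ J
    · rw [hP S (Finset.card_lt_card (Finset.ssubset_iff_subset_ne.2 ⟨hsub, hSJ⟩)), mul_zero]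
    · obtain ⟨i, hiS, hiJ⟩ := Finset.not_subset.1 hsub
      rw [Finset.prod_eq_zero hiS (hd i hiJ), zero_mul]
  · simp

end MinorOff

section Gram

variable {R : Type*} [CommRing R] {m ι : Type*} [Fintype ι] [DecidableEq ι]

theorem mul_diagonal_mul_transpose_eq_diagonal [Fintype m] [DecidableEq m] {A B : Matrix m ι R}
    {e : m → ι} (he : Function.Injective e) (hA : A.submatrix id e = 1)
    (hB : B.submatrix id e = 1)
    {c : ι → R} (hc : ∀ j ∉ Set.range e, c j = 0) :
    A * diagonal c * Bᵀ = diagonal (c ∘ e) := by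
  ext r s
  have hA' (u : m) : A r (e u) = (1 : Matrix m m R) r u := by rw [← hA]; rfl
  have hB' (u : m) : B s (e u) = (1 : Matrix m m R) s u := by rw [← hB]; rfl
  rw [mul_apply, ← Fintype.sum_of_injective e he (fun u => A r (e u) * c (e u) * B s (e u))
    (fun j => (A * diagonal c) r j * Bᵀ j s) (fun j hj => by simp [hc j hj])
    (fun u => by simp)]
  rcases eq_or_ne r s with rfl | hrs <;> simp [one_apply, *]

theorem mul_diagonal_mul_map_transpose (G : Matrix m ι R) (a : ι → R) (φ : R →+* R) :
    G * diagonal a * ((G * diagonal a).map φ)ᵀ =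
      G * (G.map φ)ᵀ + G * diagonal (fun j => a j * φ (a j) - 1) * (G.map φ)ᵀ := by
  have hdiag : diagonal (fun j => a j * φ (a j)) =
      1 + diagonal (fun j => a j * φ (a j) - 1) := by
    rw [← diagonal_one, diagonal_add]
    simp
  rw [Matrix.map_mul, diagonal_map (map_zero φ), transpose_mul, diagonal_transpose,
    Matrix.mul_assoc, ← Matrix.mul_assoc (diagonal a), diagonal_mul_diagonal, ← Matrix.mul_assoc,
    hdiag, Matrix.mul_add, Matrix.mul_one, Matrix.add_mul]

end Gram

theorem IsCyclic.range_powMonoidHom_eq_ker {G : Type*} [CommGroup G] [IsCyclic G] [Finite G]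
    {β m : ℕ} (h : β * m = Nat.card G) :
    (powMonoidHom β : G →* G).range = (powMonoidHom m).ker := by
  have hβ : 0 < β := Nat.pos_of_ne_zero fun hβ => Nat.card_pos.ne' (by rw [← h, hβ, zero_mul])
  refine Subgroup.eq_of_le_of_card_ge ?_ ?_
  · rintro _ ⟨x, rfl⟩
    simp [← pow_mul, h, pow_card_eq_one']
  · rw [IsCyclic.card_powMonoidHom_ker, IsCyclic.card_powMonoidHom_range, ← h,
      Nat.gcd_mul_left_left, Nat.gcd_mul_right_left, Nat.mul_div_cancel_left m hβ]

theorem FiniteField.exists_ne_zero_pow_eq_iff {F : Type*} [Field F] [Fintype F] {β m : ℕ}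
    (h : β * m = Fintype.card F - 1) {y : F} :
    (∃ x : F, x ≠ 0 ∧ x ^ β = y) ↔ y ^ m = 1 := by
  constructor
  · rintro ⟨x, hx, rfl⟩
    rw [← pow_mul, h, FiniteField.pow_card_sub_one_eq_one x hx]
  · intro hy
    have hm : m ≠ 0 := by
      rintro rfl
      have := Fintype.one_lt_card (α := F)
      omega
    have hy0 : y ≠ 0 := by
      rintro rfl
      simp [hm] at hy
    have hker : Units.mk0 y hy0 ∈ (powMonoidHom m : Fˣ →* Fˣ).ker := by
      ext
      simp [hy]
    have hunits : β * m = Nat.card Fˣ := by rw [Nat.card_units, Nat.card_eq_fintype_card, h]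
    rw [← IsCyclic.range_powMonoidHom_eq_ker hunits] at hker
    obtain ⟨x, hx⟩ := hker
    exact ⟨x, x.ne_zero, by simpa using congrArg Units.val hx⟩

section GaloisGram

variable {F : Type*} [Field F] {m ι : Type*} [Fintype ι]

def galoisGram (q : ℕ) (A : Matrix m ι F) : Matrix m m F := A * (A.map (· ^ q))ᵀ

theorem galoisGram_mul_diagonal [DecidableEq ι] {p s : ℕ} [ExpChar F p] (G : Matrix m ι F)
    (a : ι → F) :
    galoisGram (p ^ s) (G * diagonal a) = galoisGram (p ^ s) G +
      G * diagonal (fun j => a j ^ (p ^ s + 1) - 1) * (G.map (· ^ p ^ s))ᵀ := by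
  have hφ : ⇑(iterateFrobenius F p s) = (· ^ p ^ s) := funext fun _ => rfl
  have h := mul_diagonal_mul_map_transpose G a (iterateFrobenius F p s)
  simp only [hφ, ← pow_succ'] at h
  exact h

theorem det_galoisGram_ne_zero_of_frobenius [Fintype F] {p l l' : ℕ} [ExpChar F p]
    (hcard : Fintype.card F = p ^ (l + l')) [Fintype m] [DecidableEq m] {A : Matrix m ι F}
    (h : (galoisGram (p ^ l') A).det ≠ 0) : (galoisGram (p ^ l) A).det ≠ 0 := by
  have hmap :
      (galoisGram (p ^ l) A).map (iterateFrobenius F p l') = (galoisGram (p ^ l') A)ᵀ := by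
    rw [galoisGram, galoisGram, Matrix.map_mul, transpose_mul, transpose_transpose,
      ← transpose_map, Matrix.map_map]
    congr 2
    ext i j
    simp [iterateFrobenius_def, ← pow_mul, ← pow_add, ← hcard, FiniteField.pow_card]
  intro h0
  rw [← det_transpose, ← hmap, ← RingHom.mapMatrix_apply, ← RingHom.map_det, h0, map_zero] at h
  exact h rfl

theorem span_inter_galDualF_eq_zero_of_det_galoisGram_ne_zero [Fintype m] [DecidableEq m]
    {p l : ℕ} [ExpChar F p] {A : Matrix m ι F} (hA : (galoisGram (p ^ l) A).det ≠ 0) :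
    (span F (range A.row) : Set (ι → F)) ∩ galDualF (p ^ l) (span F (range A.row)) = {0} := by
  have hq : p ^ l ≠ 0 := (expChar_pow_pos F p l).ne'
  refine Set.eq_singleton_iff_unique_mem.2 ⟨⟨zero_mem _, fun c _ => by simp [zero_pow hq]⟩, ?_⟩
  rintro v ⟨hv, hvdual⟩
  rw [← range_vecMulLinear] at hv
  obtain ⟨y, rfl⟩ := hv
  have hfrob : (· ^ p ^ l) ∘ (y ᵥ* A) = ((· ^ p ^ l) ∘ y) ᵥ* A.map (· ^ p ^ l) :=
    funext ((iterateFrobenius F p l).map_vecMul A y)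
  have hgram : galoisGram (p ^ l) A *ᵥ ((· ^ p ^ l) ∘ y) = 0 := by
    ext r
    rw [galoisGram, ← mulVec_mulVec, mulVec_transpose, ← hfrob]
    exact hvdual (A r) (subset_span ⟨r, rfl⟩)
  have hy : y = 0 := funext fun r =>
    (pow_eq_zero_iff hq).1 (congrFun (eq_zero_of_mulVec_eq_zero hA hgram) r)
  simp [hy]

end GaloisGram

theorem scaleCodeF_span_range_row {F : Type*} [Field F] {m : Type*} [Fintype m] {n : ℕ}
    (a : Fin n → F) (G : Matrix m (Fin n) F) :
    scaleCodeF a (span F (range G.row)) = span F (range (G * diagonal a).row) := by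
  have hscale : (fun c : Fin n → F => fun j => a j * c j) = (· ᵥ* diagonal a) := by
    ext c j
    simp [vecMul_diagonal, mul_comm]
  rw [← range_vecMulLinear, ← range_vecMulLinear, LinearMap.coe_range, LinearMap.coe_range,
    scaleCodeF, hscale, ← Set.range_comp]
  ext v
  simp [vecMul_vecMul]

open Matrix in
theorem statement14_general {p e l n k t : ℕ} (hp : p.Prime) (hle : l < e)
    (F : Type*) [Field F] [Fintype F] (hcard : Fintype.card F = p ^ e)
    (hdvd : p ^ (e - l) + 1 ∣ p ^ e - 1)
    (β : ℕ) (hβ : β = (p ^ e - 1) / (p ^ (e - l) + 1))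
    (hkn : k ≤ n) (G : Matrix (Fin k) (Fin n) F)
    -- standard form `G = [I_k : M]`:
    (hstd : ∀ r s : Fin k, G r (Fin.castLE hkn s) = if r = s then 1 else 0)
    (hvanish : ∀ I : Finset (Fin k), I.card ≤ t →
      (minorOff (G * (G.map (fun x => x ^ p ^ (e - l)))ᵀ) I).det = 0)
    (J : Finset (Fin k)) (hJcard : J.card = t + 1)
    (hJdet : (minorOff (G * (G.map (fun x => x ^ p ^ (e - l)))ᵀ) J).det ≠ 0)
    (a : Fin n → F)
    -- `a_j ∈ F_q \ (F_q^*)^β` for `j ∈ J`: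
    (ha1 : ∀ s ∈ J, ¬ ∃ x : F, x ≠ 0 ∧ x ^ β = a (Fin.castLE hkn s))
    -- `a_j ∈ (F_q^*)^β` for `j ∉ J`:
    (ha2 : ∀ j : Fin n, (∀ s ∈ J, Fin.castLE hkn s ≠ j) → ∃ x : F, x ≠ 0 ∧ x ^ β = a j) :
    scaleCodeF a (Submodule.span F (Set.range (fun r : Fin k => G r)) : Set (Fin n → F)) ∩
      galDualF (p ^ l)
        (scaleCodeF a (Submodule.span F (Set.range (fun r : Fin k => G r)) : Set (Fin n → F)))
      = {0} := by
  have : Fact p.Prime := ⟨hp⟩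
  have : CharP F p := charP_of_card_eq_prime_pow hcard
  have hβm : β * (p ^ (e - l) + 1) = Fintype.card F - 1 := by
    rw [hβ, hcard, Nat.div_mul_cancel hdvd]
  set c : Fin n → F := fun j => a j ^ (p ^ (e - l) + 1) - 1
  have hc_eq_zero (j : Fin n) (hj : ∀ s ∈ J, Fin.castLE hkn s ≠ j) : c j = 0 :=
    sub_eq_zero.2 ((FiniteField.exists_ne_zero_pow_eq_iff hβm).1 (ha2 j hj))
  have hc_ne_zero (s : Fin k) (hs : s ∈ J) : c (Fin.castLE hkn s) ≠ 0 := fun h0 =>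
    ha1 s hs ((FiniteField.exists_ne_zero_pow_eq_iff hβm).2 (sub_eq_zero.1 h0))
  have hG : G.submatrix id (Fin.castLE hkn) = 1 := by
    ext r s
    simp [hstd, one_apply]
  have hGmap : (G.map (· ^ p ^ (e - l))).submatrix id (Fin.castLE hkn) = 1 := by
    rw [submatrix_map, hG, Matrix.map_one _ (by simp [hp.ne_zero]) (by simp)]
  have hgram : galoisGram (p ^ (e - l)) (G * diagonal a) =
      G * (G.map (· ^ p ^ (e - l)))ᵀ + diagonal (c ∘ Fin.castLE hkn) := by
    rw [galoisGram_mul_diagonal, mul_diagonal_mul_transpose_eq_diagonal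
      (Fin.castLE_injective hkn) hG hGmap fun j hj => hc_eq_zero j fun s _ hs => hj ⟨s, hs⟩]
    rfl
  have hdet : (galoisGram (p ^ (e - l)) (G * diagonal a)).det ≠ 0 := by
    rw [hgram, det_add_diagonal_eq_prod_mul_det_minorOff (d := c ∘ Fin.castLE hkn)
      (fun u hu => hc_eq_zero _ fun s hs h => hu (Fin.castLE_injective hkn h ▸ hs))
      (fun S hS => hvanish S (by omega))]
    exact mul_ne_zero (Finset.prod_ne_zero_iff.2 hc_ne_zero) hJdet
  rw [show Set.range (fun r => G r) = Set.range G.row from rfl, scaleCodeF_span_range_row]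
  exact span_inter_galDualF_eq_zero_of_det_galoisGram_ne_zero
    (det_galoisGram_ne_zero_of_frobenius (l' := e - l)
      (by rw [hcard, Nat.add_sub_cancel' hle.le]) hdet)

open Matrix in
/-- construction of `l`-Galois LCD codes `C^a` over `F_q` from a linear
code with generator matrix `G = [I_k : M]`, where `P = G(F^{e−l}(G))ᵀ`,
`β = (p^e − 1)/(p^{e−l} + 1)` and `(F_q^*)^β = {x^β : x ≠ 0}`. -/
theorem statement14 {p e l n k t : ℕ} (hp : p.Prime) (hl0 : 0 < l) (hle : l < e)
    (F : Type*) [Field F] [Fintype F] (hcard : Fintype.card F = p ^ e)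
    (hdvd : p ^ (e - l) + 1 ∣ p ^ e - 1)
    (β : ℕ) (hβ : β = (p ^ e - 1) / (p ^ (e - l) + 1))
    (hkn : k ≤ n) (G : Matrix (Fin k) (Fin n) F)
    -- the rows of `G` form a basis of `C` (`G` has rank `k`):
    (hGli : LinearIndependent F (fun r : Fin k => G r))
    -- standard form `G = [I_k : M]`:
    (hstd : ∀ r s : Fin k, G r (Fin.castLE hkn s) = if r = s then 1 else 0)
    (ht : t + 1 ≤ k)
    (hvanish : ∀ I : Finset (Fin k), I.card ≤ t →
      (minorOff (G * (G.map (fun x => x ^ p ^ (e - l)))ᵀ) I).det = 0)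
    (J : Finset (Fin k)) (hJcard : J.card = t + 1)
    (hJdet : (minorOff (G * (G.map (fun x => x ^ p ^ (e - l)))ᵀ) J).det ≠ 0)
    (a : Fin n → F)
    -- `a_j ∈ F_q \ (F_q^*)^β` for `j ∈ J`:
    (ha1 : ∀ s ∈ J, ¬ ∃ x : F, x ≠ 0 ∧ x ^ β = a (Fin.castLE hkn s))
    -- `a_j ∈ (F_q^*)^β` for `j ∉ J`:
    (ha2 : ∀ j : Fin n, (∀ s ∈ J, Fin.castLE hkn s ≠ j) → ∃ x : F, x ≠ 0 ∧ x ^ β = a j) :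
    scaleCodeF a (Submodule.span F (Set.range (fun r : Fin k => G r)) : Set (Fin n → F)) ∩
      galDualF (p ^ l)
        (scaleCodeF a (Submodule.span F (Set.range (fun r : Fin k => G r)) : Set (Fin n → F)))
      = {0} :=
  statement14_general hp hle F hcard hdvd β hβ hkn G hstd hvanish J hJcard hJdet a ha1 ha2
end
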